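/- arXiv:1111.6364 — 3 statements merged into one kernel-verified Lean document; each statement's English description precedes it below -/
import Mathlib

section
/- Let K ∈ ℝ, λ ∈ ℝ, D > 0, and set d = 2D. Let v : ℝ → ℝ be three times continuously differentiable on [-D, D] and satisfy the Neumann eigenvalue problem v''(x) - K x v'(x) = -λ v(x) for all x ∈ (-D, D), with v'(-D) = 0 and v'(D) = 0. Assume moreover that v'(x) > 0 for all x ∈ (-D, D). Then λ ≥ 4s(1-s)·π²/d² + sK for every s ∈ (0, 1); in particular λ ≥ sup_{s ∈ (0,1)} { 4s(1-s)π²/d² + sK }. -/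
/-!
The derivative `φ = v'` solves `φ'' = K x φ' + (K - λ) φ`, is positive on `(-D, D)` and vanishes
at `±D`, so `φ'(-D) ≥ 0 ≥ φ'(D)`. If `H' + H² - K x H < K - λ` (a strict subsolution of the
Riccati equation solved by `φ'/φ`) and `G' = H - K x`, then `(φ' - H φ) e^G` is strictly
increasing on `[-D, D]`, which contradicts these boundary signs. When
`λ < 4s(1-s) b² + sK` for some `0 < b < π/(2D)`, the function
`H = -4s(1-s) b tan(bx) + (1-s) K x`, regular on `[-D, D]`, is such a subsolution.
-/

open Real Set Filter Topology

theorem IsMinOn.hasDerivWithinAt_Icc_left_nonneg {f : ℝ → ℝ} {a b f' : ℝ} (hab : a < b)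
    (h : IsMinOn f (Icc a b) a) (hf : HasDerivWithinAt f f' (Icc a b) a) : 0 ≤ f' := by
  have hy : b - a ∈ posTangentConeAt (Icc a b) a :=
    sub_mem_posTangentConeAt_of_segment_subset (segment_eq_Icc hab.le).subset
  have := h.localize.hasFDerivWithinAt_nonneg hf.hasFDerivWithinAt hy
  simp only [ContinuousLinearMap.toSpanSingleton_apply, smul_eq_mul] at this
  exact nonneg_of_mul_nonneg_right this (sub_pos.2 hab)

theorem IsMinOn.hasDerivWithinAt_Icc_right_nonpos {f : ℝ → ℝ} {a b f' : ℝ} (hab : a < b)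
    (h : IsMinOn f (Icc a b) b) (hf : HasDerivWithinAt f f' (Icc a b) b) : f' ≤ 0 := by
  have hy : a - b ∈ posTangentConeAt (Icc a b) b :=
    sub_mem_posTangentConeAt_of_segment_subset
      ((segment_symm ℝ b a).trans (segment_eq_Icc hab.le)).subset
  have := h.localize.hasFDerivWithinAt_nonneg hf.hasFDerivWithinAt hy
  simp only [ContinuousLinearMap.toSpanSingleton_apply, smul_eq_mul] at this
  exact nonpos_of_mul_nonneg_right this (sub_neg.2 hab)

theorem strictMonoOn_of_riccati_subsolution {a b : ℝ} {φ ψ H h G c p : ℝ → ℝ}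
    (hφc : ContinuousOn φ (Icc a b)) (hψc : ContinuousOn ψ (Icc a b))
    (hHc : ContinuousOn H (Icc a b)) (hGc : ContinuousOn G (Icc a b))
    (hφ : ∀ x ∈ Ioo a b, HasDerivAt φ (ψ x) x)
    (hψ : ∀ x ∈ Ioo a b, HasDerivAt ψ (c x * φ x + p x * ψ x) x)
    (hH : ∀ x ∈ Ioo a b, HasDerivAt H (h x) x)
    (hG : ∀ x ∈ Ioo a b, HasDerivAt G (H x - p x) x)
    (hφpos : ∀ x ∈ Ioo a b, 0 < φ x)
    (hsub : ∀ x ∈ Ioo a b, h x + H x ^ 2 - p x * H x < c x) :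
    StrictMonoOn (fun x => (ψ x - H x * φ x) * exp (G x)) (Icc a b) := by
  refine strictMonoOn_of_deriv_pos (convex_Icc a b)
    ((hψc.sub (hHc.mul hφc)).mul (continuous_exp.comp_continuousOn hGc)) fun x hx => ?_
  rw [interior_Icc] at hx
  have hW : HasDerivAt (fun x => (ψ x - H x * φ x) * exp (G x)) _ x :=
    ((hψ x hx).sub ((hH x hx).mul (hφ x hx))).mul (hG x hx).exp
  rw [hW.deriv]
  calc 0 < φ x * (c x - (h x + H x ^ 2 - p x * H x)) * exp (G x) :=
        mul_pos (mul_pos (hφpos x hx) (sub_pos.2 (hsub x hx))) (exp_pos _)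
    _ = _ := by simp only [Pi.sub_apply, Pi.mul_apply]; ring

noncomputable def riccatiComparison (K s b x : ℝ) : ℝ :=
  -(4 * s * (1 - s) * b) * tan (b * x) + (1 - s) * K * x

noncomputable def riccatiComparisonLogWeight (K s b x : ℝ) : ℝ :=
  4 * s * (1 - s) * log (cos (b * x)) - s * K * x ^ 2 / 2

theorem hasDerivAt_riccatiComparison {K s b x : ℝ} (hx : cos (b * x) ≠ 0) :
    HasDerivAt (riccatiComparison K s b)
      ((1 - s) * K - 4 * s * (1 - s) * b ^ 2 * (1 + tan (b * x) ^ 2)) x := by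
  have hlin : HasDerivAt (fun y => b * y) b x := by simpa using (hasDerivAt_id x).const_mul b
  have htan := ((hasDerivAt_tan hx).comp x hlin).const_mul (-(4 * s * (1 - s) * b))
  have h : HasDerivAt (riccatiComparison K s b) _ x :=
    htan.add ((hasDerivAt_id x).const_mul ((1 - s) * K))
  refine h.congr_deriv ?_
  rw [one_div, ← inv_one_add_tan_sq hx, inv_inv]
  ring

theorem hasDerivAt_riccatiComparisonLogWeight {K s b x : ℝ} (hx : cos (b * x) ≠ 0) :
    HasDerivAt (riccatiComparisonLogWeight K s b) (riccatiComparison K s b x - K * x) x := by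
  have hlin : HasDerivAt (fun y => b * y) b x := by simpa using (hasDerivAt_id x).const_mul b
  have h : HasDerivAt (riccatiComparisonLogWeight K s b) _ x :=
    ((hlin.cos.log hx).const_mul (4 * s * (1 - s))).sub
      (((hasDerivAt_pow 2 x).const_mul (s * K)).div_const 2)
  refine h.congr_deriv ?_
  rw [riccatiComparison, tan_eq_sin_div_cos]
  push_cast
  ring

/-- As `1 - 4s(1-s) = (1-2s)²`, the terms quadratic in `tan (b * x)` and `x` form a square. -/
theorem riccatiComparison_riccati_eq (K s b x : ℝ) :
    (1 - s) * K - 4 * s * (1 - s) * b ^ 2 * (1 + tan (b * x) ^ 2)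
      + riccatiComparison K s b x ^ 2 - K * x * riccatiComparison K s b x
      = K - (4 * s * (1 - s) * b ^ 2 + s * K)
        - s * (1 - s) * (2 * (1 - 2 * s) * b * tan (b * x) + K * x) ^ 2 := by
  rw [riccatiComparison]
  ring

theorem exists_lt_mul_sq_of_lt {θ μ a : ℝ} (ha : 0 < a) (h : μ < θ * a ^ 2) :
    ∃ b ∈ Ioo 0 a, μ < θ * b ^ 2 := by
  have hnear : ∀ᶠ b in 𝓝 a, μ < θ * b ^ 2 :=
    ((continuous_const.mul (continuous_pow 2)).tendsto a).eventually (lt_mem_nhds h)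
  obtain ⟨b, hμ, hb⟩ := ((hnear.filter_mono nhdsWithin_le_nhds).and (Ioo_mem_nhdsLT ha)).exists
  exact ⟨b, hb, hμ⟩

theorem cos_mul_pos_of_mem_Icc {b D x : ℝ} (hb : b ∈ Ioo 0 (π / (2 * D))) (hx : x ∈ Icc (-D) D) :
    0 < cos (b * x) := by
  have hD : 0 < 2 * D := (div_pos_iff_of_pos_left pi_pos).1 (hb.1.trans hb.2)
  have hbD : b * D < π / 2 := by
    have := (lt_div_iff₀ hD).1 hb.2
    linarith
  apply cos_pos_of_mem_Ioo
  constructor <;> nlinarith [hb.1, hx.1, hx.2]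

theorem le_of_pos_dirichlet_eigenfunction {K lam D s : ℝ} (hD : 0 < D) (hs : s ∈ Ioo 0 1)
    {φ ψ : ℝ → ℝ} (hφc : ContinuousOn φ (Icc (-D) D)) (hψc : ContinuousOn ψ (Icc (-D) D))
    (hφ : ∀ x ∈ Ioo (-D) D, HasDerivAt φ (ψ x) x)
    (hψ : ∀ x ∈ Ioo (-D) D, HasDerivAt ψ ((K - lam) * φ x + K * x * ψ x) x)
    (hφpos : ∀ x ∈ Ioo (-D) D, 0 < φ x) (hφl : φ (-D) = 0) (hφr : φ D = 0)
    (hψl : 0 ≤ ψ (-D)) (hψr : ψ D ≤ 0) :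
    4 * s * (1 - s) * (π / (2 * D)) ^ 2 + s * K ≤ lam := by
  by_contra! hlt
  obtain ⟨b, hb, hlam⟩ := exists_lt_mul_sq_of_lt (μ := lam - s * K) (θ := 4 * s * (1 - s))
    (a := π / (2 * D)) (by positivity) (by linarith)
  have hH x (hx : x ∈ Icc (-D) D) :=
    hasDerivAt_riccatiComparison (K := K) (s := s) (cos_mul_pos_of_mem_Icc hb hx).ne'
  have hG x (hx : x ∈ Icc (-D) D) :=
    hasDerivAt_riccatiComparisonLogWeight (K := K) (s := s) (cos_mul_pos_of_mem_Icc hb hx).ne'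
  have hsub (x : ℝ) : (1 - s) * K - 4 * s * (1 - s) * b ^ 2 * (1 + tan (b * x) ^ 2)
      + riccatiComparison K s b x ^ 2 - K * x * riccatiComparison K s b x < K - lam := by
    rw [riccatiComparison_riccati_eq]
    have : 0 ≤ s * (1 - s) := mul_nonneg hs.1.le (sub_nonneg.2 hs.2.le)
    nlinarith [sq_nonneg (2 * (1 - 2 * s) * b * tan (b * x) + K * x)]
  have hW := strictMonoOn_of_riccati_subsolution (c := fun _ => K - lam) (p := fun x => K * x)
    hφc hψc (fun x hx => (hH x hx).continuousAt.continuousWithinAt)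
    (fun x hx => (hG x hx).continuousAt.continuousWithinAt) hφ hψ
    (fun x hx => hH x (Ioo_subset_Icc_self hx)) (fun x hx => hG x (Ioo_subset_Icc_self hx))
    hφpos (fun x _ => hsub x)
  have hends := hW (left_mem_Icc.2 (neg_le_self hD.le)) (right_mem_Icc.2 (neg_le_self hD.le))
    (neg_lt_self hD)
  simp only [hφl, hφr, mul_zero, sub_zero] at hends
  nlinarith [exp_pos (riccatiComparisonLogWeight K s b (-D)),
    exp_pos (riccatiComparisonLogWeight K s b D)]

theorem le_of_monotone_neumann_eigenfunction {K lam D s : ℝ} (hD : 0 < D) (hs : s ∈ Ioo 0 1)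
    {v : ℝ → ℝ} (hv : ContDiffOn ℝ 2 v (Icc (-D) D))
    (hode : ∀ x ∈ Ioo (-D) D,
      derivWithin (derivWithin v (Icc (-D) D)) (Icc (-D) D) x
        - K * x * derivWithin v (Icc (-D) D) x = -lam * v x)
    (hbc1 : derivWithin v (Icc (-D) D) (-D) = 0)
    (hbc2 : derivWithin v (Icc (-D) D) D = 0)
    (hmono : ∀ x ∈ Ioo (-D) D, 0 < derivWithin v (Icc (-D) D) x) :
    4 * s * (1 - s) * (π / (2 * D)) ^ 2 + s * K ≤ lam := by
  set I := Icc (-D) D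
  set φ := derivWithin v I
  set ψ := derivWithin φ I
  have hDD : -D < D := neg_lt_self hD
  have hφC : ContDiffOn ℝ 1 φ I := hv.derivWithin (uniqueDiffOn_Icc hDD) (by norm_num)
  have hψc : ContinuousOn ψ I :=
    (hφC.derivWithin (m := 0) (uniqueDiffOn_Icc hDD) le_rfl).continuousOn
  have hderiv {f : ℝ → ℝ} (hf : DifferentiableOn ℝ f I) x (hx : x ∈ Ioo (-D) D) :
      HasDerivAt f (derivWithin f I x) x :=
    (hf x (Ioo_subset_Icc_self hx)).hasDerivWithinAt.hasDerivAt (Icc_mem_nhds hx.1 hx.2)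
  have hφd : DifferentiableOn ℝ φ I := hφC.differentiableOn one_ne_zero
  have hφmin : ∀ x ∈ I, 0 ≤ φ x := by
    rintro x ⟨hl, hr⟩
    rcases hl.eq_or_lt with rfl | hl
    · exact hbc1.ge
    rcases hr.eq_or_lt with rfl | hr
    · exact hbc2.ge
    exact (hmono x ⟨hl, hr⟩).le
  have hψ x (hx : x ∈ Ioo (-D) D) : HasDerivAt ψ ((K - lam) * φ x + K * x * ψ x) x := by
    have hψeq : ψ =ᶠ[𝓝 x] fun y => K * y * φ y - lam * v y := by
      filter_upwards [isOpen_Ioo.mem_nhds hx] with y hy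
      linarith [hode y hy]
    refine (hψeq.hasDerivAt_iff).2 ?_
    have := ((hasDerivAt_id x).const_mul K).mul (hderiv hφd x hx)
      |>.sub ((hderiv (hv.differentiableOn (by norm_num)) x hx).const_mul lam)
    exact this.congr_deriv (by simp only [id_eq]; ring)
  exact le_of_pos_dirichlet_eigenfunction hD hs hφC.continuousOn hψc (hderiv hφd) hψ hmono
    hbc1 hbc2
    (IsMinOn.hasDerivWithinAt_Icc_left_nonneg hDD (fun x hx => hbc1 ▸ hφmin x hx)
      (hφd _ (left_mem_Icc.2 hDD.le)).hasDerivWithinAt)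
    (IsMinOn.hasDerivWithinAt_Icc_right_nonpos hDD (fun x hx => hbc2 ▸ hφmin x hx)
      (hφd _ (right_mem_Icc.2 hDD.le)).hasDerivWithinAt)

/-- Neumann eigenvalue lower bound for the one-dimensional
Ornstein–Uhlenbeck operator `L = d²/dx² - Kx d/dx` on `(-D, D)`, `d = 2D`,
with a monotone eigenfunction `v`. -/
theorem witten_neumann_eigenvalue_lower_bound
    (K lam D d : ℝ) (hD : 0 < D) (hd : d = 2 * D)
    (v : ℝ → ℝ) (hv : ContDiffOn ℝ 3 v (Set.Icc (-D) D))
    (hode : ∀ x ∈ Set.Ioo (-D) D,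
      derivWithin (derivWithin v (Set.Icc (-D) D)) (Set.Icc (-D) D) x
        - K * x * derivWithin v (Set.Icc (-D) D) x = -lam * v x)
    (hbc1 : derivWithin v (Set.Icc (-D) D) (-D) = 0)
    (hbc2 : derivWithin v (Set.Icc (-D) D) D = 0)
    (hmono : ∀ x ∈ Set.Ioo (-D) D, 0 < derivWithin v (Set.Icc (-D) D) x) :
    (∀ s ∈ Set.Ioo (0:ℝ) 1, lam ≥ 4 * s * (1 - s) * π ^ 2 / d ^ 2 + s * K) ∧
    lam ≥ sSup {y : ℝ | ∃ s ∈ Set.Ioo (0:ℝ) 1,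
      y = 4 * s * (1 - s) * π ^ 2 / d ^ 2 + s * K} := by
  have hbound : ∀ s ∈ Ioo (0:ℝ) 1, lam ≥ 4 * s * (1 - s) * π ^ 2 / d ^ 2 + s * K := fun s hs => by
    simpa only [hd, div_pow, mul_div_assoc] using
      le_of_monotone_neumann_eigenfunction hD hs (hv.of_le (by norm_num)) hode hbc1 hbc2 hmono
  refine ⟨hbound, csSup_le ⟨_, 1 / 2, by norm_num, rfl⟩ ?_⟩
  rintro y ⟨s, hs, rfl⟩
  exact hbound s hs
end

section
/- Let K ∈ ℝ, λ ∈ ℝ, D > 0, and set d = 2D. Let f : ℝ → ℝ be twice continuously differentiable on [-D, D] with f(x) > 0 for all x ∈ (-D, D), f(-D) = 0, f(D) = 0, and suppose f''(x) - K x f'(x) = -(λ - K) f(x) for all x ∈ (-D, D). Then for every s ∈ (0, 1), λ ≥ 4s(1-s)·π²/d² + sK. -/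
open Real Set

/-!
Write `μ = λ - K/2`. The function `p = f e^{-Kx²/4}` is a positive Dirichlet solution of the
Schrödinger equation `p'' = (K²x²/4 - μ) p` on `(-D, D)`. For any `W`, the Picone function
`p p' - W p²` vanishes at `±D`, and its derivative is `(p' - W p)² + (V - W' - W²) p²` with
`V = K²x²/4 - μ`; by Rolle it has a zero, so `V ≤ W' + W²` somewhere. The trial function
`W = -4s(1-s) b tan(bx) + (1-2s)Kx/2`, for `0 < b < π/d`, satisfies
`W' + W² = K²x²/4 - 4s(1-s)b² + (1-2s)K/2 - 4s(1-s)((1-2s) b tan(bx) + Kx/2)²`,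
which yields `λ ≥ 4s(1-s)b² + sK`; letting `b → π/d` gives the claim.
-/

theorem exists_le_riccati_of_dirichlet {a b : ℝ} {p p' V W W' : ℝ → ℝ} (hab : a < b)
    (hp : ContinuousOn p (Icc a b)) (hp' : ContinuousOn p' (Icc a b))
    (hW : ContinuousOn W (Icc a b)) (hpa : p a = 0) (hpb : p b = 0)
    (hpos : ∀ x ∈ Ioo a b, 0 < p x)
    (hdp : ∀ x ∈ Ioo a b, HasDerivAt p (p' x) x)
    (hdp' : ∀ x ∈ Ioo a b, HasDerivAt p' (V x * p x) x)
    (hdW : ∀ x ∈ Ioo a b, HasDerivAt W (W' x) x) :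
    ∃ x ∈ Ioo a b, V x ≤ W' x + W x ^ 2 := by
  have hpicone : ∀ x ∈ Ioo a b, HasDerivAt (fun y => p y * p' y - W y * p y ^ 2)
      ((p' x - W x * p x) ^ 2 + (V x - W' x - W x ^ 2) * p x ^ 2) x := by
    intro x hx
    refine (((hdp x hx).fun_mul (hdp' x hx)).fun_sub
      ((hdW x hx).fun_mul ((hdp x hx).fun_pow 2))).congr_deriv ?_
    push_cast
    ring
  obtain ⟨x, hx, hzero⟩ := exists_hasDerivAt_eq_zero hab
    ((hp.mul hp').sub (hW.mul (hp.pow 2))) (by simp [hpa, hpb]) hpicone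
  refine ⟨x, hx, ?_⟩
  by_contra! hlt
  have hgap : 0 < (V x - W' x - W x ^ 2) * p x ^ 2 :=
    mul_pos (by linarith) (pow_pos (hpos x hx) 2)
  linarith [sq_nonneg (p' x - W x * p x)]

theorem hasDerivAt_mul_exp_neg_mul_sq {g : ℝ → ℝ} {g' x : ℝ} (K : ℝ) (hg : HasDerivAt g g' x) :
    HasDerivAt (fun y => g y * exp (-(K / 4) * y ^ 2))
      ((g' - K / 2 * x * g x) * exp (-(K / 4) * x ^ 2)) x := by
  have hexp : HasDerivAt (fun y => exp (-(K / 4) * y ^ 2))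
      (exp (-(K / 4) * x ^ 2) * (-(K / 4) * (2 * x))) x := by
    simpa using ((hasDerivAt_pow 2 x).const_mul (-(K / 4))).exp
  exact (hg.mul hexp).congr_deriv (by ring)

theorem hasDerivAt_schrodinger_of_ode {f f' f'' : ℝ → ℝ} {K lam x : ℝ}
    (hf : HasDerivAt f (f' x) x) (hf' : HasDerivAt f' (f'' x) x)
    (hode : f'' x - K * x * f' x = -(lam - K) * f x) :
    HasDerivAt (fun y => (f' y - K / 2 * y * f y) * exp (-(K / 4) * y ^ 2))
      ((K ^ 2 * x ^ 2 / 4 - (lam - K / 2)) * (f x * exp (-(K / 4) * x ^ 2))) x := by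
  have hdrift : HasDerivAt (fun y => f' y - K / 2 * y * f y)
      (f'' x - (K / 2 * 1 * f x + K / 2 * x * f' x)) x :=
    hf'.sub (((hasDerivAt_id x).const_mul (K / 2)).mul hf)
  refine (hasDerivAt_mul_exp_neg_mul_sq K hdrift).congr_deriv ?_
  linear_combination exp (-(K / 4) * x ^ 2) * hode

noncomputable def riccatiTrial (s K b y : ℝ) : ℝ :=
  -(4 * s * (1 - s)) * b * tan (b * y) + (1 - 2 * s) * K / 2 * y

theorem hasDerivAt_riccatiTrial {s K b x : ℝ} (h : cos (b * x) ≠ 0) :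
    HasDerivAt (riccatiTrial s K b)
      (-(4 * s * (1 - s)) * b ^ 2 * (1 + tan (b * x) ^ 2) + (1 - 2 * s) * K / 2) x := by
  have htan : HasDerivAt (fun y => tan (b * y)) (1 / cos (b * x) ^ 2 * (b * 1)) x :=
    (hasDerivAt_tan h).comp x ((hasDerivAt_id x).const_mul b)
  refine ((htan.const_mul _).add ((hasDerivAt_id x).const_mul _)).congr_deriv ?_
  rw [one_div, ← inv_one_add_tan_sq h]
  have : 1 + tan (b * x) ^ 2 ≠ 0 := by positivity
  field_simp

theorem riccatiTrial_deriv_add_sq_le {s K b x : ℝ} (hs : s ∈ Icc (0 : ℝ) 1) :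
    (-(4 * s * (1 - s)) * b ^ 2 * (1 + tan (b * x) ^ 2) + (1 - 2 * s) * K / 2)
      + riccatiTrial s K b x ^ 2
      ≤ K ^ 2 * x ^ 2 / 4 - (4 * s * (1 - s) * b ^ 2 - (1 - 2 * s) * K / 2) := by
  have hk : 0 ≤ 4 * s * (1 - s) := mul_nonneg (by linarith [hs.1]) (by linarith [hs.2])
  have hgap : K ^ 2 * x ^ 2 / 4 - (4 * s * (1 - s) * b ^ 2 - (1 - 2 * s) * K / 2)
      - ((-(4 * s * (1 - s)) * b ^ 2 * (1 + tan (b * x) ^ 2) + (1 - 2 * s) * K / 2)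
        + riccatiTrial s K b x ^ 2)
      = 4 * s * (1 - s) * ((1 - 2 * s) * b * tan (b * x) + K * x / 2) ^ 2 := by
    unfold riccatiTrial
    ring
  linarith [mul_nonneg hk (sq_nonneg ((1 - 2 * s) * b * tan (b * x) + K * x / 2))]

theorem le_eigenvalue_of_mul_lt_pi_div_two {K lam D s b : ℝ} {f f' f'' : ℝ → ℝ} (hD : 0 < D)
    (hf : ContinuousOn f (Icc (-D) D)) (hf' : ContinuousOn f' (Icc (-D) D))
    (hdf : ∀ x ∈ Ioo (-D) D, HasDerivAt f (f' x) x)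
    (hdf' : ∀ x ∈ Ioo (-D) D, HasDerivAt f' (f'' x) x)
    (hode : ∀ x ∈ Ioo (-D) D, f'' x - K * x * f' x = -(lam - K) * f x)
    (hpos : ∀ x ∈ Ioo (-D) D, 0 < f x) (hb1 : f (-D) = 0) (hb2 : f D = 0)
    (hs : s ∈ Icc (0 : ℝ) 1) (hb : 0 ≤ b) (hbD : b * D < π / 2) :
    4 * s * (1 - s) * b ^ 2 + s * K ≤ lam := by
  have hcos : ∀ y ∈ Icc (-D) D, cos (b * y) ≠ 0 := fun y hy =>
    (cos_pos_of_mem_Ioo ⟨by nlinarith [hy.1], by nlinarith [hy.2]⟩).ne'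
  have hE : Continuous fun y : ℝ => exp (-(K / 4) * y ^ 2) := by fun_prop
  obtain ⟨x, hx, hle⟩ := exists_le_riccati_of_dirichlet
    (p := fun y => f y * exp (-(K / 4) * y ^ 2))
    (V := fun y => K ^ 2 * y ^ 2 / 4 - (lam - K / 2)) (W := riccatiTrial s K b)
    (by linarith) (hf.mul hE.continuousOn)
    ((hf'.sub ((continuous_const.mul continuous_id).continuousOn.mul hf)).mul hE.continuousOn)
    (fun y hy => (hasDerivAt_riccatiTrial (hcos y hy)).continuousAt.continuousWithinAt)
    (by simp [hb1]) (by simp [hb2]) (fun y hy => mul_pos (hpos y hy) (exp_pos _))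
    (fun y hy => hasDerivAt_mul_exp_neg_mul_sq K (hdf y hy))
    (fun y hy => hasDerivAt_schrodinger_of_ode (hdf y hy) (hdf' y hy) (hode y hy))
    (fun y hy => hasDerivAt_riccatiTrial (hcos y (Ioo_subset_Icc_self hy)))
  linarith [riccatiTrial_deriv_add_sq_le (K := K) (b := b) (x := x) hs]

theorem DifferentiableOn.hasDerivAt_derivWithin_Icc {g : ℝ → ℝ} {a b x : ℝ}
    (hg : DifferentiableOn ℝ g (Icc a b)) (hx : x ∈ Ioo a b) :
    HasDerivAt g (derivWithin g (Icc a b) x) x :=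
  (hg x (Ioo_subset_Icc_self hx)).hasDerivWithinAt.hasDerivAt (Icc_mem_nhds hx.1 hx.2)

/-- Dirichlet form of the one-dimensional lemma: a positive
Dirichlet eigenfunction `f` of `f'' - Kxf' = -(λ-K)f` on `(-D, D)` with
`f(±D) = 0` forces `λ ≥ 4s(1-s)π²/d² + sK` for every `s ∈ (0,1)`, `d = 2D`. -/
theorem dirichlet_eigenvalue_lower_bound
    (K lam D d : ℝ) (hD : 0 < D) (hd : d = 2 * D)
    (f : ℝ → ℝ) (hf : ContDiffOn ℝ 2 f (Set.Icc (-D) D))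
    (hpos : ∀ x ∈ Set.Ioo (-D) D, 0 < f x)
    (hb1 : f (-D) = 0) (hb2 : f D = 0)
    (hode : ∀ x ∈ Set.Ioo (-D) D,
      derivWithin (derivWithin f (Set.Icc (-D) D)) (Set.Icc (-D) D) x
        - K * x * derivWithin f (Set.Icc (-D) D) x = -(lam - K) * f x) :
    ∀ s ∈ Set.Ioo (0:ℝ) 1, lam ≥ 4 * s * (1 - s) * π ^ 2 / d ^ 2 + s * K := by
  intro s hs
  have hf' : ContDiffOn ℝ 1 (derivWithin f (Icc (-D) D)) (Icc (-D) D) :=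
    hf.derivWithin (uniqueDiffOn_Icc (by linarith)) (by norm_num)
  have hbound : Ioo 0 (π / d) ⊆ {b | 4 * s * (1 - s) * b ^ 2 + s * K ≤ lam} := by
    intro b hb
    refine le_eigenvalue_of_mul_lt_pi_div_two hD hf.continuousOn hf'.continuousOn
      (fun x => (hf.differentiableOn (by norm_num)).hasDerivAt_derivWithin_Icc)
      (fun x => (hf'.differentiableOn (by norm_num)).hasDerivAt_derivWithin_Icc)
      hode hpos hb1 hb2 (Ioo_subset_Icc_self hs) hb.1.le ?_
    have := hb.2
    rw [hd, lt_div_iff₀ (by positivity)] at this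
    linarith
  have hd0 : 0 < π / d := by rw [hd]; positivity
  have hlim := (isClosed_le (by fun_prop) continuous_const).closure_subset_iff.2 hbound
  rw [closure_Ioo hd0.ne] at hlim
  calc 4 * s * (1 - s) * π ^ 2 / d ^ 2 + s * K
      = 4 * s * (1 - s) * (π / d) ^ 2 + s * K := by ring
    _ ≤ lam := hlim ⟨hd0.le, le_rfl⟩
end

section
/- Let K ∈ ℝ and d > 0 with -4π² ≤ K d² ≤ 4π². Then sup_{s ∈ (0,1)} { 4s(1-s)·π²/d² + sK } = (π/d + K d/(4π))². -/
open Real Set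

/-- If `-4π² ≤ K d² ≤ 4π²` then
`sup_{s ∈ (0,1)} {4s(1-s)π²/d² + sK} = (π/d + Kd/(4π))²`. -/
theorem sup_eval_case_two
    (K d : ℝ) (hd : 0 < d)
    (h1 : -(4 * π ^ 2) ≤ K * d ^ 2) (h2 : K * d ^ 2 ≤ 4 * π ^ 2) :
    sSup {y : ℝ | ∃ s ∈ Set.Ioo (0:ℝ) 1,
      y = 4 * s * (1 - s) * π ^ 2 / d ^ 2 + s * K}
      = (π / d + K * d / (4 * π)) ^ 2 := by
  have hπ := Real.pi_pos
  set M := (π / d + K * d / (4 * π)) ^ 2 with hM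
  set a := 4 * π ^ 2 / d ^ 2 with ha
  have ha0 : 0 < a := by positivity
  set s0 := (4 * π ^ 2 + K * d ^ 2) / (8 * π ^ 2) with hs0
  have hs00 : 0 ≤ s0 := div_nonneg (by linarith) (by positivity)
  have hs01 : s0 ≤ 1 := (div_le_one (by positivity)).mpr (by linarith)
  have key : ∀ s : ℝ, 4 * s * (1 - s) * π ^ 2 / d ^ 2 + s * K
      = M - a * (s - s0) ^ 2 := by
    intro s
    rw [hM, ha, hs0]
    field_simp
    ring
  apply csSup_eq_of_forall_le_of_forall_lt_exists_gt
  · exact ⟨_, ⟨1/2, by norm_num, rfl⟩⟩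
  · rintro y ⟨s, hs, rfl⟩
    rw [key]
    nlinarith [sq_nonneg (s - s0), mul_nonneg ha0.le (sq_nonneg (s - s0))]
  · intro w hw
    have hε : 0 < M - w := by linarith
    set t := min (1/2) (Real.sqrt ((M - w) / a)) with ht
    have htpos : 0 < t :=
      lt_min (by norm_num) (Real.sqrt_pos.mpr (div_pos hε ha0))
    have ht1 : t ≤ 1/2 := min_le_left _ _
    have ht2 : t ^ 2 ≤ (M - w) / a := by
      have h := min_le_right (1/2 : ℝ) (Real.sqrt ((M - w) / a))
      have hsq := Real.sq_sqrt (le_of_lt (div_pos hε ha0))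
      nlinarith [Real.sqrt_nonneg ((M - w) / a), htpos]
    have ht2' : a * t ^ 2 ≤ M - w := by
      rw [← le_div_iff₀' ha0]; exact ht2
    set s := s0 + t * (1/2 - s0) with hsdef
    refine ⟨_, ⟨s, ⟨?_, ?_⟩, rfl⟩, ?_⟩
    · rw [hsdef]
      nlinarith [mul_nonneg hs00 (show (0:ℝ) ≤ 1 - t by linarith)]
    · rw [hsdef]
      nlinarith [mul_nonneg (show (0:ℝ) ≤ 1 - t by linarith)
        (show (0:ℝ) ≤ 1 - s0 by linarith)]
    · rw [key]
      have h14 : (1/2 - s0) ^ 2 ≤ 1/4 := by nlinarith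
      have hcalc : a * (s - s0) ^ 2 ≤ (M - w) * (1/4) := by
        calc a * (s - s0) ^ 2 = (a * t ^ 2) * ((1/2 - s0) ^ 2) := by
              rw [hsdef]; ring
          _ ≤ (M - w) * (1/4) :=
              mul_le_mul ht2' h14 (sq_nonneg _) hε.le
      clear_value s t s0 a M
      linarith
end
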